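/- For every symmetric polynomial f ∈ ℂ[X_1,…,X_n]^{S_n}, the element f(x_1,…,x_n) is central in H, and likewise the element f(y_1,…,y_n) is central in H. -/

import Mathlib

noncomputable section

/-- Generators of the rational Cherednik algebra of `S_n` at `t = 0`. -/
inductive CherGen (n : ℕ) : Type
  | x : Fin n → CherGen n
  | y : Fin n → CherGen n
  | T : Equiv.Perm (Fin n) → CherGen n

namespace Cherednik

variable (n : ℕ)

/-- The free algebra on the generators. -/
abbrev F := FreeAlgebra ℂ (CherGen n)

def fx (i : Fin n) : F n := FreeAlgebra.ι ℂ (CherGen.x i)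
def fy (i : Fin n) : F n := FreeAlgebra.ι ℂ (CherGen.y i)
def fT (w : Equiv.Perm (Fin n)) : F n := FreeAlgebra.ι ℂ (CherGen.T w)

/-- `s_{ij}`, the transposition interchanging `i` and `j`. -/
def fs (i j : Fin n) : F n := fT n (Equiv.swap i j)

/-- The defining relations of the rational Cherednik algebra at `t = 0`. -/
inductive Rel : F n → F n → Prop
  | T_mul (u v : Equiv.Perm (Fin n)) : Rel (fT n u * fT n v) (fT n (u * v))
  | T_one : Rel (fT n 1) 1
  | x_comm (i j : Fin n) : Rel (fx n i * fx n j) (fx n j * fx n i)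
  | y_comm (i j : Fin n) : Rel (fy n i * fy n j) (fy n j * fy n i)
  | w_x (w : Equiv.Perm (Fin n)) (i : Fin n) :
      Rel (fT n w * fx n i) (fx n (w i) * fT n w)
  | w_y (w : Equiv.Perm (Fin n)) (i : Fin n) :
      Rel (fT n w * fy n i) (fy n (w i) * fT n w)
  | yx_same (i : Fin n) :
      Rel (fy n i * fx n i)
        (fx n i * fy n i - ∑ j ∈ Finset.univ.filter (fun j => j ≠ i), fs n i j)
  | yx_ne (i j : Fin n) (h : i ≠ j) :
      Rel (fy n i * fx n j) (fx n j * fy n i + fs n i j)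

/-- The rational Cherednik algebra `H` of `S_n` at `t = 0`. -/
abbrev H := RingQuot (Rel n)

def hx (i : Fin n) : H n := RingQuot.mkAlgHom ℂ (Rel n) (fx n i)
def hy (i : Fin n) : H n := RingQuot.mkAlgHom ℂ (Rel n) (fy n i)
def hT (w : Equiv.Perm (Fin n)) : H n := RingQuot.mkAlgHom ℂ (Rel n) (fT n w)
def hs (i j : Fin n) : H n := hT n (Equiv.swap i j)

end Cherednik

namespace Cherednik

/-- Evaluation of a polynomial `f ∈ ℂ[X_1,…,X_n]` at a family of elements of `H`
(well-defined on commuting families such as the `x_i` or the `y_i`). -/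
def evalAt {n : ℕ} (v : Fin n → H n) (f : MvPolynomial (Fin n) ℂ) : H n :=
  ∑ m ∈ f.support, MvPolynomial.coeff m f • (List.ofFn fun i => v i ^ m i).prod

end Cherednik

/-!
Commuting `y_i` past `f(x)` is governed by divided differences:
`y_i f(x) = f(x) y_i + ∑_{j ≠ i} ((s_{ij} f - f) / (X_i - X_j))(x) s_{ij}`, since both sides obey
the same twisted Leibniz rule and agree on the generators `X_k`. For symmetric `f` every divided
difference vanishes, so `f(x)` commutes with the `y_i`; it commutes with the `x_i` trivially and
with `w ∈ S_n` because `w f(x) w⁻¹ = (w · f)(x)`. The involution `x_i ↔ y_i`, `w ↦ sign(w) w`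
transports the result to `f(y)`.
-/

namespace Cherednik

open Finset MvPolynomial

open scoped IsMulCommutative

variable {n : ℕ}

lemma hT_mul_hT (u v : Equiv.Perm (Fin n)) : hT n u * hT n v = hT n (u * v) := by
  simpa only [hT, map_mul] using RingQuot.mkAlgHom_rel ℂ (Rel.T_mul u v)

lemma hT_one : hT n 1 = 1 := by
  simpa only [hT, map_one] using RingQuot.mkAlgHom_rel ℂ (Rel.T_one (n := n))

lemma hx_commute (i j : Fin n) : Commute (hx n i) (hx n j) := by
  show hx n i * hx n j = hx n j * hx n i
  simpa only [hx, map_mul] using RingQuot.mkAlgHom_rel ℂ (Rel.x_comm i j)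

lemma hy_commute (i j : Fin n) : Commute (hy n i) (hy n j) := by
  show hy n i * hy n j = hy n j * hy n i
  simpa only [hy, map_mul] using RingQuot.mkAlgHom_rel ℂ (Rel.y_comm i j)

lemma hT_mul_hx (w : Equiv.Perm (Fin n)) (i : Fin n) :
    hT n w * hx n i = hx n (w i) * hT n w := by
  simpa only [hT, hx, map_mul] using RingQuot.mkAlgHom_rel ℂ (Rel.w_x w i)

lemma hT_mul_hy (w : Equiv.Perm (Fin n)) (i : Fin n) :
    hT n w * hy n i = hy n (w i) * hT n w := by
  simpa only [hT, hy, map_mul] using RingQuot.mkAlgHom_rel ℂ (Rel.w_y w i)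

lemma hy_mul_hx_self (i : Fin n) :
    hy n i * hx n i = hx n i * hy n i - ∑ j ∈ univ.filter (· ≠ i), hs n i j := by
  simpa only [hy, hx, hs, hT, fs, map_mul, map_sub, map_sum] using
    RingQuot.mkAlgHom_rel ℂ (Rel.yx_same i)

lemma hy_mul_hx_of_ne {i j : Fin n} (h : i ≠ j) :
    hy n i * hx n j = hx n j * hy n i + hs n i j := by
  simpa only [hy, hx, hs, hT, fs, map_mul, map_add] using
    RingQuot.mkAlgHom_rel ℂ (Rel.yx_ne i j h)

lemma hs_comm (i j : Fin n) : hs n i j = hs n j i := by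
  rw [hs, hs, Equiv.swap_comm]

lemma hy_mul_hx (i k : Fin n) :
    hy n i * hx n k = hx n k * hy n i + ∑ j ∈ univ.filter (· ≠ i),
      ((if j = k then 1 else 0) - (if i = k then 1 else 0) : ℂ) • hs n i j := by
  by_cases hik : i = k
  · subst hik
    rw [hy_mul_hx_self, sub_eq_add_neg, ← sum_neg_distrib]
    congr 1
    refine sum_congr rfl fun j hj => ?_
    simp only [(mem_filter.mp hj).2, if_false, if_true, zero_sub]
    exact (neg_one_smul ℂ _).symm
  · simp only [if_neg hik, sub_zero, ite_smul, one_smul, zero_smul, sum_ite_eq',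
      mem_filter, mem_univ, true_and, if_pos (Ne.symm hik), hy_mul_hx_of_ne hik]

instance : IsMulCommutative (Algebra.adjoin ℂ (Set.range (hx n))) :=
  Algebra.isMulCommutative_adjoin ℂ <| by
    rintro _ ⟨i, rfl⟩ _ ⟨j, rfl⟩
    exact hx_commute i j

/-- `f ↦ f(x_1, …, x_n)`; `aeval` needs a commutative target, hence the detour through the
subalgebra generated by the `x_i`. -/
def evalX : MvPolynomial (Fin n) ℂ →ₐ[ℂ] H n :=
  (Algebra.adjoin ℂ (Set.range (hx n))).val.comp
    (aeval fun i => ⟨hx n i, Algebra.subset_adjoin ⟨i, rfl⟩⟩)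

lemma evalX_X (k : Fin n) : evalX (X k) = hx n k := by
  simp [evalX]

@[simp]
lemma evalX_C (a : ℂ) : evalX (C a : MvPolynomial (Fin n) ℂ) = algebraMap ℂ (H n) a :=
  evalX.commutes a

lemma evalAt_comp_X (φ : MvPolynomial (Fin n) ℂ →ₐ[ℂ] H n) (f : MvPolynomial (Fin n) ℂ) :
    evalAt (fun i => φ (X i)) f = φ f := by
  conv_rhs => rw [← eval₂_eta f, eval₂_eq', map_sum]
  refine sum_congr rfl fun m _ => ?_
  rw [map_mul, ← List.prod_ofFn, map_list_prod, List.map_ofFn, ← algebraMap_eq, AlgHom.commutes,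
    ← Algebra.smul_def]
  simp only [Function.comp_def, map_pow]

lemma evalAt_hx (f : MvPolynomial (Fin n) ℂ) : evalAt (hx n) f = evalX f := by
  simpa only [evalX_X] using evalAt_comp_X evalX f

lemma hT_mul_evalX (w : Equiv.Perm (Fin n)) (f : MvPolynomial (Fin n) ℂ) :
    hT n w * evalX f = evalX (rename w f) * hT n w := by
  induction f using MvPolynomial.induction_on with
  | C a => rw [rename_C, evalX_C, Algebra.commutes]
  | add p q hp hq => rw [map_add, map_add, map_add, mul_add, add_mul, hp, hq]
  | mul_X p k hp =>
    rw [map_mul, map_mul, evalX_X, rename_X, map_mul, evalX_X, ← mul_assoc, hp,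
      mul_assoc, mul_assoc, hT_mul_hx, ← mul_assoc]

/-- `c j` plays the role of the divided difference `(s_{ij} f - f) / (X_i - X_j)`. -/
def HasDunklExpansion (i : Fin n) (f : MvPolynomial (Fin n) ℂ) : Prop :=
  ∃ c : Fin n → MvPolynomial (Fin n) ℂ,
    (∀ j, (X i - X j) * c j = rename (Equiv.swap i j) f - f) ∧
    hy n i * evalX f = evalX f * hy n i + ∑ j ∈ univ.filter (· ≠ i), evalX (c j) * hs n i j

lemma hasDunklExpansion_C (i : Fin n) (a : ℂ) : HasDunklExpansion i (C a) :=
  ⟨0, fun j => by simp, by simp [Algebra.commutes]⟩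

lemma HasDunklExpansion.add {i : Fin n} {f g : MvPolynomial (Fin n) ℂ}
    (hf : HasDunklExpansion i f) (hg : HasDunklExpansion i g) :
    HasDunklExpansion i (f + g) := by
  obtain ⟨c, hc, hfy⟩ := hf
  obtain ⟨d, hd, hgy⟩ := hg
  refine ⟨c + d, fun j => ?_, ?_⟩
  · rw [Pi.add_apply, mul_add, hc j, hd j, map_add]
    ring
  · simp only [map_add, mul_add, add_mul, hfy, hgy, Pi.add_apply, sum_add_distrib]
    abel

lemma HasDunklExpansion.mul {i : Fin n} {f g : MvPolynomial (Fin n) ℂ}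
    (hf : HasDunklExpansion i f) (hg : HasDunklExpansion i g) :
    HasDunklExpansion i (f * g) := by
  obtain ⟨c, hc, hfy⟩ := hf
  obtain ⟨d, hd, hgy⟩ := hg
  refine ⟨fun j => c j * rename (Equiv.swap i j) g + f * d j, fun j => ?_, ?_⟩
  · rw [map_mul]
    linear_combination rename (Equiv.swap i j) g * hc j + f * hd j
  · have hs_mul_evalX (j : Fin n) :
        hs n i j * evalX g = evalX (rename (Equiv.swap i j) g) * hs n i j :=
      hT_mul_evalX _ g
    simp only [map_mul, map_add, ← mul_assoc, hfy, add_mul, sum_mul, sum_add_distrib]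
    simp only [mul_assoc, hs_mul_evalX, hgy, mul_add, mul_sum]
    abel

lemma hasDunklExpansion_X (i k : Fin n) : HasDunklExpansion i (X k) := by
  refine ⟨fun j => C ((if j = k then 1 else 0) - (if i = k then 1 else 0)), fun j => ?_, ?_⟩
  · rw [rename_X]
    rcases eq_or_ne i k with rfl | hik
    · by_cases hji : j = i <;> simp [hji]
    rcases eq_or_ne j k with rfl | hjk
    · simp [hik]
    · simp [hik, hjk, Equiv.swap_apply_of_ne_of_ne (Ne.symm hik) (Ne.symm hjk)]
  · simp only [evalX_X, evalX_C, ← Algebra.smul_def, hy_mul_hx]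

lemma hasDunklExpansion (i : Fin n) (f : MvPolynomial (Fin n) ℂ) : HasDunklExpansion i f := by
  induction f using MvPolynomial.induction_on with
  | C a => exact hasDunklExpansion_C i a
  | add p q hp hq => exact hp.add hq
  | mul_X p k hp => exact hp.mul (hasDunklExpansion_X i k)

lemma hy_commute_evalX {f : MvPolynomial (Fin n) ℂ} (hf : f.IsSymmetric) (i : Fin n) :
    Commute (hy n i) (evalX f) := by
  obtain ⟨c, hc, hfy⟩ := hasDunklExpansion i f
  have hc0 : ∀ j ∈ univ.filter (· ≠ i), c j = 0 := fun j hj =>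
    (mul_eq_zero.mp (by rw [hc j, hf, sub_self])).resolve_left
      (sub_ne_zero.mpr fun h => (mem_filter.mp hj).2 (X_injective h).symm)
  rw [Commute, SemiconjBy, hfy, sum_eq_zero fun j hj => by rw [hc0 j hj, map_zero, zero_mul],
    add_zero]

@[elab_as_elim]
lemma induction_on {P : H n → Prop} (h : H n) (algebraMap : ∀ a, P (algebraMap ℂ (H n) a))
    (x : ∀ i, P (hx n i)) (y : ∀ i, P (hy n i)) (T : ∀ w, P (hT n w))
    (add : ∀ a b, P a → P b → P (a + b)) (mul : ∀ a b, P a → P b → P (a * b)) :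
    P h := by
  obtain ⟨a, rfl⟩ := RingQuot.mkAlgHom_surjective ℂ (Rel n) h
  induction a using FreeAlgebra.induction with
  | grade0 a => simpa only [AlgHom.commutes] using algebraMap a
  | grade1 g =>
    cases g with
    | x i => exact x i
    | y i => exact y i
    | T w => exact T w
  | mul a b ha hb => simpa only [map_mul] using mul _ _ ha hb
  | add a b ha hb => simpa only [map_add] using add _ _ ha hb

lemma commute_of_commute_gens {z : H n} (hzx : ∀ i, Commute z (hx n i))
    (hzy : ∀ i, Commute z (hy n i)) (hzT : ∀ w, Commute z (hT n w)) (h : H n) :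
    Commute z h :=
  induction_on h (fun a => (Algebra.commutes a z).symm) hzx hzy hzT (fun _ _ => .add_right)
    (fun _ _ => .mul_right)

lemma commute_evalX {f : MvPolynomial (Fin n) ℂ} (hf : f.IsSymmetric) (h : H n) :
    Commute (evalX f) h := by
  refine commute_of_commute_gens (fun i => ?_) (fun i => (hy_commute_evalX hf i).symm)
    (fun w => ?_) h
  · rw [← evalX_X]
    exact (Commute.all _ _).map evalX
  · rw [Commute, SemiconjBy, hT_mul_evalX, hf w]

/-- The sign twist on `S_n` is what makes `x_i ↔ y_i` respect the `y`-`x` relations. -/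
def swapXYFree : F n →ₐ[ℂ] H n :=
  FreeAlgebra.lift ℂ fun
    | CherGen.x i => hy n i
    | CherGen.y i => hx n i
    | CherGen.T w => ((Equiv.Perm.sign w : ℤ) : ℂ) • hT n w

@[simp] lemma swapXYFree_fx (i : Fin n) : swapXYFree (fx n i) = hy n i :=
  FreeAlgebra.lift_ι_apply _ _

@[simp] lemma swapXYFree_fy (i : Fin n) : swapXYFree (fy n i) = hx n i :=
  FreeAlgebra.lift_ι_apply _ _

lemma swapXYFree_fT (w : Equiv.Perm (Fin n)) :
    swapXYFree (fT n w) = ((Equiv.Perm.sign w : ℤ) : ℂ) • hT n w :=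
  FreeAlgebra.lift_ι_apply _ _

lemma swapXYFree_fs {i j : Fin n} (h : i ≠ j) : swapXYFree (fs n i j) = -hs n i j := by
  rw [fs, swapXYFree_fT, Equiv.Perm.sign_swap h, hs]
  module

lemma swapXYFree_rel ⦃a b : F n⦄ (h : Rel n a b) : swapXYFree a = swapXYFree b := by
  cases h with
  | T_mul u v =>
    rw [map_mul, swapXYFree_fT, swapXYFree_fT, swapXYFree_fT, smul_mul_smul_comm, hT_mul_hT,
      Equiv.Perm.sign_mul, Units.val_mul, Int.cast_mul]
  | T_one =>
    rw [swapXYFree_fT, map_one, map_one, hT_one, Units.val_one, Int.cast_one, one_smul]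
  | x_comm i j => simpa using (hy_commute i j).eq
  | y_comm i j => simpa using (hx_commute i j).eq
  | w_x w i =>
    rw [map_mul, map_mul, swapXYFree_fT, swapXYFree_fx, swapXYFree_fx, smul_mul_assoc,
      mul_smul_comm, hT_mul_hy]
  | w_y w i =>
    rw [map_mul, map_mul, swapXYFree_fT, swapXYFree_fy, swapXYFree_fy, smul_mul_assoc,
      mul_smul_comm, hT_mul_hx]
  | yx_same i =>
    rw [map_mul, map_sub, map_mul, map_sum, swapXYFree_fx, swapXYFree_fy,
      sum_congr rfl fun j hj => swapXYFree_fs (Ne.symm (mem_filter.mp hj).2), sum_neg_distrib,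
      sub_neg_eq_add, hy_mul_hx_self]
    abel
  | yx_ne i j hij =>
    rw [map_mul, map_add, map_mul, swapXYFree_fx, swapXYFree_fy, swapXYFree_fs hij,
      hy_mul_hx_of_ne hij.symm, hs_comm]
    abel

def swapXY : H n →ₐ[ℂ] H n := RingQuot.liftAlgHom ℂ ⟨swapXYFree, swapXYFree_rel⟩

lemma swapXY_hx (i : Fin n) : swapXY (hx n i) = hy n i := by
  rw [hx, swapXY, RingQuot.liftAlgHom_mkAlgHom_apply, swapXYFree_fx]

lemma swapXY_hy (i : Fin n) : swapXY (hy n i) = hx n i := by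
  rw [hy, swapXY, RingQuot.liftAlgHom_mkAlgHom_apply, swapXYFree_fy]

lemma swapXY_hT (w : Equiv.Perm (Fin n)) :
    swapXY (hT n w) = ((Equiv.Perm.sign w : ℤ) : ℂ) • hT n w := by
  rw [hT, swapXY, RingQuot.liftAlgHom_mkAlgHom_apply, swapXYFree_fT, ← hT]

lemma swapXY_swapXY (h : H n) : swapXY (swapXY h) = h := by
  induction h using induction_on with
  | algebraMap a => simp only [AlgHom.commutes]
  | x i => rw [swapXY_hx, swapXY_hy]
  | y i => rw [swapXY_hy, swapXY_hx]
  | T w => rw [swapXY_hT, map_smul, swapXY_hT, smul_smul, ← Int.cast_mul, ← Units.val_mul,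
      Int.units_mul_self, Units.val_one, Int.cast_one, one_smul]
  | add a b ha hb => rw [map_add, map_add, ha, hb]
  | mul a b ha hb => rw [map_mul, map_mul, ha, hb]

lemma evalAt_hy (f : MvPolynomial (Fin n) ℂ) : evalAt (hy n) f = swapXY (evalX f) := by
  simpa only [AlgHom.comp_apply, evalX_X, swapXY_hx] using evalAt_comp_X (swapXY.comp evalX) f

end Cherednik

open Cherednik in
theorem statement6_general (n : ℕ) (f : MvPolynomial (Fin n) ℂ)
    (hf : MvPolynomial.IsSymmetric f) :
    (∀ h : H n, evalAt (hx n) f * h = h * evalAt (hx n) f) ∧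
    (∀ h : H n, evalAt (hy n) f * h = h * evalAt (hy n) f) := by
  refine ⟨fun h => evalAt_hx f ▸ commute_evalX hf h, fun h => ?_⟩
  rw [evalAt_hy, ← swapXY_swapXY h, ← map_mul, ← map_mul, commute_evalX hf (swapXY h)]

open Cherednik in
/-- For a symmetric polynomial `f`, the elements `f(x_1,…,x_n)` and `f(y_1,…,y_n)`
are central in `H`. -/
theorem statement6 (n : ℕ) (hn : 0 < n) (f : MvPolynomial (Fin n) ℂ)
    (hf : MvPolynomial.IsSymmetric f) :
    (∀ h : H n, evalAt (hx n) f * h = h * evalAt (hx n) f) ∧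
    (∀ h : H n, evalAt (hy n) f * h = h * evalAt (hy n) f) :=
  statement6_general n f hf
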